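/- The map φ_B that sends a Dyck path P = p_1 p_2 ⋯ p_{2n} of size n with all peaks at even height to the word u_1 ⋯ u_n with u_j = U if p_{2j−1}p_{2j} = NN, u_j = H if p_{2j−1}p_{2j} = EN, and u_j = D if p_{2j−1}p_{2j} = EE, is a bijection onto the set of Riordan paths of length n (Motzkin paths with no horizontal step at height 0). -/

import Mathlib

/-- A Dyck path of size `n`: a list of booleans (`true` = north step, `false` = east step)
from `(0,0)` to `(n,n)` staying weakly above the diagonal `y = x`. -/
def IsDyckPath (n : ℕ) (w : List Bool) : Prop :=
  w.length = 2 * n ∧ w.count true = n ∧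
    ∀ k, (w.take k).count false ≤ (w.take k).count true

/-- The `y`-coordinate of the lattice point reached after `k` steps. -/
def ycoord (w : List Bool) (k : ℕ) : ℕ := (w.take k).count true

/-- The `x`-coordinate of the lattice point reached after `k` steps. -/
def xcoord (w : List Bool) (k : ℕ) : ℕ := (w.take k).count false

/-- A peak: a north step at position `i` followed by an east step. -/
def IsPeak (w : List Bool) (i : ℕ) : Prop := w[i]? = some true ∧ w[i+1]? = some false

/-- A valley: an east step at position `i` followed by a north step. -/
def IsValley (w : List Bool) (i : ℕ) : Prop := w[i]? = some false ∧ w[i+1]? = some true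

/-- Height above the diagonal after `k` steps. -/
def pdepth (w : List Bool) (k : ℕ) : ℤ := (ycoord w k : ℤ) - (xcoord w k : ℤ)

/-- Step `i` (a north step) of `w` is matched with step `j` (an east step):
the facing east step at the same height (balanced-parentheses matching). -/
def Matches (w : List Bool) (i j : ℕ) : Prop :=
  i < j ∧ w[i]? = some true ∧ w[j]? = some false ∧
    pdepth w (j + 1) = pdepth w i ∧ ∀ k, i < k → k ≤ j → pdepth w i < pdepth w k

/-- The graph on `m` points whose edges are the upper arches and the lower arches;
its connected components are the components of the corresponding meander. -/
def meanderGraph (m : ℕ) (upper lower : ℕ → ℕ → Prop) : SimpleGraph (Fin m) where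
  Adj i j := i ≠ j ∧ (upper i.1 j.1 ∨ upper j.1 i.1 ∨ lower i.1 j.1 ∨ lower j.1 i.1)
  symm := by
    constructor
    intro i j h
    exact ⟨h.1.symm, by tauto⟩
  loopless := by
    constructor
    intro i h
    exact h.1 rfl

/-- The number of components of the meander with the matching of `P` above and the
matching of `Q` below. -/
noncomputable def trajPQ (n : ℕ) (P Q : List Bool) : ℕ :=
  Nat.card (meanderGraph (2 * n) (Matches P) (Matches Q)).ConnectedComponent

/-- The number of components of the meander with the matching of `P` above and the
rainbow matching `i ↦ 2n - 1 - i` below. -/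
noncomputable def traj (n : ℕ) (P : List Bool) : ℕ :=
  Nat.card (meanderGraph (2 * n) (Matches P)
    (fun i j => i + j + 1 = 2 * n)).ConnectedComponent

/-- No peak with even `y`-coordinate and no valley with odd `x`-coordinate. -/
def NoBadCorner (w : List Bool) : Prop :=
  (∀ i, IsPeak w i → Odd (ycoord w (i + 1))) ∧
  (∀ i, IsValley w i → Even (xcoord w (i + 1)))

/-- A bad corner: a peak with even `y`-coordinate or a valley with odd `x`-coordinate. -/
def IsBadCorner (w : List Bool) (i : ℕ) : Prop :=
  (IsPeak w i ∧ Even (ycoord w (i + 1))) ∨ (IsValley w i ∧ Odd (xcoord w (i + 1)))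

/-- Interchange the two steps of the corner at positions `i`, `i+1`. -/
def swapCorner (w : List Bool) (i : ℕ) : List Bool :=
  (w.set i (w.getD (i + 1) true)).set (i + 1) (w.getD i true)

open Classical in
/-- The involution `φ`: swap the two steps of the first bad corner, if any. -/
noncomputable def phiMap (w : List Bool) : List Bool :=
  if h : ∃ i, IsBadCorner w i then swapCorner w (Nat.find h) else w

/-- The number of unit squares between a Dyck path and the diagonal `y = x`. -/
def area (w : List Bool) : ℕ :=
  ((List.range w.length).map fun i =>
    if w.getD i true then 0 else ycoord w i - xcoord w i - 1).sum

/-- The zigzag Dyck path `(NE)^m`. -/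
def zigzag (m : ℕ) : List Bool := (List.replicate m [true, false]).flatten

/-- `N^{2a_1} E^{2b_1} ⋯ N^{2a_t} E^{2b_t}` for `ab = [(a_1,b_1),…,(a_t,b_t)]`. -/
def doubledWord (ab : List (ℕ × ℕ)) : List Bool :=
  (ab.map fun p => List.replicate (2 * p.1) true ++ List.replicate (2 * p.2) false).flatten

/-- `N^{a_1} E^{b_1} ⋯ N^{a_t} E^{b_t}` for `ab = [(a_1,b_1),…,(a_t,b_t)]`. -/
def halfWord (ab : List (ℕ × ℕ)) : List Bool :=
  (ab.map fun p => List.replicate p.1 true ++ List.replicate p.2 false).flatten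

/-- All peaks at odd height (`height` = `y - x` at the peak's lattice point). -/
def AllPeaksOdd (w : List Bool) : Prop :=
  ∀ i, IsPeak w i → Odd (ycoord w (i + 1) - xcoord w (i + 1))

/-- All peaks at even height. -/
def AllPeaksEven (w : List Bool) : Prop :=
  ∀ i, IsPeak w i → Even (ycoord w (i + 1) - xcoord w (i + 1))

/-- Steps of a Motzkin path: up, horizontal, down. -/
inductive MStep | U | H | D
deriving DecidableEq

/-- The total height change along a list of Motzkin steps. -/
def msum (l : List MStep) : ℤ :=
  (l.map fun s => match s with | MStep.U => 1 | MStep.H => 0 | MStep.D => -1).sum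

/-- A Motzkin path of length `n`. -/
def IsMotzkin (n : ℕ) (l : List MStep) : Prop :=
  l.length = n ∧ msum l = 0 ∧ ∀ k, 0 ≤ msum (l.take k)

/-- A Riordan path of length `n`: a Motzkin path with no horizontal step on the `x`-axis. -/
def IsRiordan (n : ℕ) (l : List MStep) : Prop :=
  IsMotzkin n l ∧ ∀ i, l[i]? = some MStep.H → msum (l.take i) ≠ 0

/-- The map `φ_A` from Dyck paths of size `n+1` (all peaks at odd height)
to Motzkin paths of length `n`: `v_j` is read off from steps `p_{2j} p_{2j+1}`. -/
def phiA (n : ℕ) (P : List Bool) : List MStep :=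
  (List.range n).map fun j =>
    match P.getD (2 * j + 1) true, P.getD (2 * j + 2) true with
    | true, true => MStep.U
    | false, true => MStep.H
    | _, _ => MStep.D

/-- The map `φ_B` from Dyck paths of size `n` (all peaks at even height)
to Riordan paths of length `n`: `u_j` is read off from steps `p_{2j-1} p_{2j}`. -/
def phiB (n : ℕ) (P : List Bool) : List MStep :=
  (List.range n).map fun j =>
    match P.getD (2 * j) true, P.getD (2 * j + 1) true with
    | true, true => MStep.U
    | false, true => MStep.H
    | _, _ => MStep.D

/-!
The inverse of `φ_B` replaces `U`, `H`, `D` by `NN`, `EN`, `EE`. Such a word has no peak `NE`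
at an even position, and neither has a Dyck path whose peaks are all at even height, since the
height after an odd number of steps is odd; on words without such peaks the two maps are
mutually inverse. The height of the word of `l` after `2k` steps is twice the height of `l`
after `k` steps, and after `2k + 1` steps it is one less unless the `k`-th step is `U`. So the
word stays weakly above the diagonal iff `l` stays weakly above the axis and never takes an
`H` step from height `0`.
-/

def stepHeight : Option Bool → ℤ
  | some true => 1
  | some false => -1
  | none => 0

lemma pdepth_succ (w : List Bool) (k : ℕ) :
    pdepth w (k + 1) = pdepth w k + stepHeight w[k]? := by
  rcases h : w[k]? with _ | _ | _ <;>
    simp [pdepth, ycoord, xcoord, List.take_add_one, h, stepHeight] <;> ring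

lemma ycoord_add_xcoord (w : List Bool) (k : ℕ) :
    ycoord w k + xcoord w k = min k w.length := by
  simp [ycoord, xcoord, List.count_true_add_count_false]

lemma IsPeak.lt_length {w : List Bool} {i : ℕ} (h : IsPeak w i) : i + 1 < w.length :=
  (List.getElem?_eq_some_iff.mp h.2).1

lemma isDyckPath_iff_pdepth {n : ℕ} {w : List Bool} :
    IsDyckPath n w ↔ w.length = 2 * n ∧ pdepth w (2 * n) = 0 ∧ ∀ k, 0 ≤ pdepth w k := by
  simp only [IsDyckPath, pdepth, ycoord, xcoord, sub_nonneg, Nat.cast_le]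
  refine and_congr_right fun hlen => ?_
  have hsum := w.count_true_add_count_false
  rw [← hlen, List.take_length]
  exact and_congr_left fun _ => by omega

lemma IsPeak.ycoord_add_xcoord {w : List Bool} {i : ℕ} (h : IsPeak w i) :
    ycoord w (i + 1) + xcoord w (i + 1) = i + 1 := by
  rw [_root_.ycoord_add_xcoord]
  have := h.lt_length
  omega

lemma not_isPeak_two_mul_of_allPeaksEven {n : ℕ} {w : List Bool} (hw : IsDyckPath n w)
    (he : AllPeaksEven w) (j : ℕ) : ¬ IsPeak w (2 * j) := by
  intro hj
  have hsum := hj.ycoord_add_xcoord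
  -- `AllPeaksEven` is stated with truncated subtraction, so `x ≤ y` is needed here.
  have hle : xcoord w (2 * j + 1) ≤ ycoord w (2 * j + 1) := hw.2.2 _
  have := Nat.even_iff.mp (he _ hj)
  omega

namespace MStep

def height : MStep → ℤ
  | U => 1 | H => 0 | D => -1

def ofPair : Bool → Bool → MStep
  | true, true => U
  | false, true => H
  | _, _ => D

def first : MStep → Bool
  | U => true | _ => false

def second : MStep → Bool
  | D => false | _ => true

lemma ofPair_first_second (s : MStep) : ofPair s.first s.second = s := by
  cases s <;> rfl

lemma first_second_ofPair {a b : Bool} (h : ¬ (a = true ∧ b = false)) :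
    (ofPair a b).first = a ∧ (ofPair a b).second = b := by
  cases a <;> cases b <;> simp_all [ofPair, first, second]

end MStep

lemma msum_eq_sum_map_height (l : List MStep) : msum l = (l.map MStep.height).sum := rfl

lemma msum_take_add_one {l : List MStep} {i : ℕ} {s : MStep} (h : l[i]? = some s) :
    msum (l.take (i + 1)) = msum (l.take i) + s.height := by
  simp [msum_eq_sum_map_height, List.take_add_one, h]

lemma phiB_eq_map_ofPair (n : ℕ) (P : List Bool) :
    phiB n P =
      (List.range n).map fun j => MStep.ofPair (P.getD (2 * j) true) (P.getD (2 * j + 1) true) :=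
  rfl

@[simp] lemma length_phiB (n : ℕ) (P : List Bool) : (phiB n P).length = n := by
  simp [phiB]

def phiBInv (l : List MStep) : List Bool := l.flatMap fun s => [s.first, s.second]

@[simp] lemma phiBInv_cons (s : MStep) (l : List MStep) :
    phiBInv (s :: l) = s.first :: s.second :: phiBInv l := rfl

@[simp] lemma length_phiBInv (l : List MStep) : (phiBInv l).length = 2 * l.length := by
  induction l with
  | nil => rfl
  | cons s l ih => simp [ih]; ring

lemma getElem?_phiBInv_two_mul (l : List MStep) (j : ℕ) :
    (phiBInv l)[2 * j]? = l[j]?.map MStep.first := by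
  induction l generalizing j with
  | nil => simp [phiBInv]
  | cons s l ih => cases j <;> simp [Nat.mul_succ, ih]

lemma getElem?_phiBInv_two_mul_add_one (l : List MStep) (j : ℕ) :
    (phiBInv l)[2 * j + 1]? = l[j]?.map MStep.second := by
  induction l generalizing j with
  | nil => simp [phiBInv]
  | cons s l ih => cases j <;> simp [Nat.mul_succ, ih]

lemma not_isPeak_phiBInv_two_mul (l : List MStep) (j : ℕ) : ¬ IsPeak (phiBInv l) (2 * j) := by
  rintro ⟨h₁, h₂⟩
  rw [getElem?_phiBInv_two_mul] at h₁
  rw [getElem?_phiBInv_two_mul_add_one] at h₂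
  rcases hj : l[j]? with _ | ⟨_ | _ | _⟩ <;> simp_all [MStep.first, MStep.second]

lemma phiB_phiBInv {n : ℕ} {l : List MStep} (hl : l.length = n) : phiB n (phiBInv l) = l := by
  subst hl
  refine List.ext_getElem (length_phiB _ _) fun j hj _ => ?_
  simp only [phiB_eq_map_ofPair, List.getElem_map, List.getElem_range,
    List.getD_eq_getElem?_getD, getElem?_phiBInv_two_mul, getElem?_phiBInv_two_mul_add_one,
    List.getElem?_eq_getElem (by simpa using hj)]
  exact MStep.ofPair_first_second _

lemma phiBInv_phiB {n : ℕ} {P : List Bool} (hlen : P.length = 2 * n)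
    (hP : ∀ j, ¬ IsPeak P (2 * j)) : phiBInv (phiB n P) = P := by
  have key : ∀ j, (phiB n P)[j]?.map MStep.first = P[2 * j]? ∧
      (phiB n P)[j]?.map MStep.second = P[2 * j + 1]? := by
    intro j
    by_cases hj : j < n
    · obtain ⟨a, ha⟩ : ∃ a, P[2 * j]? = some a :=
        ⟨_, List.getElem?_eq_getElem (by omega)⟩
      obtain ⟨b, hb⟩ : ∃ b, P[2 * j + 1]? = some b :=
        ⟨_, List.getElem?_eq_getElem (by omega)⟩
      have hab := MStep.first_second_ofPair (a := a) (b := b)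
        fun ⟨ha', hb'⟩ => hP j ⟨ha' ▸ ha, hb' ▸ hb⟩
      simp [phiB_eq_map_ofPair, hj, ha, hb, List.getD_eq_getElem?_getD, hab]
    · simp [phiB_eq_map_ofPair, hj, List.getElem?_eq_none (show P.length ≤ 2 * j by omega),
        List.getElem?_eq_none (show P.length ≤ 2 * j + 1 by omega)]
  refine List.ext_getElem? fun i => ?_
  obtain ⟨j, rfl | rfl⟩ := Nat.even_or_odd' i
  · rw [getElem?_phiBInv_two_mul, (key j).1]
  · rw [getElem?_phiBInv_two_mul_add_one, (key j).2]

lemma pdepth_phiBInv_two_mul (l : List MStep) (k : ℕ) :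
    pdepth (phiBInv l) (2 * k) = 2 * msum (l.take k) := by
  induction k with
  | zero => simp [pdepth, ycoord, xcoord, msum]
  | succ k ih =>
    rw [Nat.mul_succ, pdepth_succ, pdepth_succ, ih, getElem?_phiBInv_two_mul,
      getElem?_phiBInv_two_mul_add_one, msum_eq_sum_map_height, msum_eq_sum_map_height,
      List.take_add_one]
    rcases l[k]? with _ | ⟨_ | _ | _⟩ <;>
      simp [stepHeight, MStep.first, MStep.second, MStep.height] <;> ring

lemma pdepth_phiBInv_two_mul_add_one (l : List MStep) (k : ℕ) :
    pdepth (phiBInv l) (2 * k + 1) =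
      2 * msum (l.take k) + stepHeight (l[k]?.map MStep.first) := by
  rw [pdepth_succ, pdepth_phiBInv_two_mul, getElem?_phiBInv_two_mul]

lemma pdepth_phiBInv_nonneg_iff (l : List MStep) :
    (∀ k, 0 ≤ pdepth (phiBInv l) k) ↔
      (∀ k, 0 ≤ msum (l.take k)) ∧ ∀ i, l[i]? = some .H → msum (l.take i) ≠ 0 := by
  constructor
  · intro h
    refine ⟨fun k => by simpa [pdepth_phiBInv_two_mul] using h (2 * k), fun i hi h0 => ?_⟩
    have := h (2 * i + 1)
    simp [pdepth_phiBInv_two_mul_add_one, hi, h0, stepHeight, MStep.first] at this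
  · rintro ⟨hnn, hH⟩ k
    obtain ⟨j, rfl | rfl⟩ := Nat.even_or_odd' k
    · simpa [pdepth_phiBInv_two_mul] using hnn j
    rw [pdepth_phiBInv_two_mul_add_one]
    have hj := hnn j
    rcases hs : l[j]? with _ | ⟨_ | _ | _⟩
    · simpa [stepHeight] using hj
    · simp only [Option.map_some, MStep.first, stepHeight]; omega
    · have := hH j hs
      simp only [Option.map_some, MStep.first, stepHeight]; omega
    · have := msum_take_add_one hs ▸ hnn (j + 1)
      simp only [Option.map_some, MStep.first, stepHeight, MStep.height] at this ⊢; omega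

lemma isDyckPath_phiBInv_iff {n : ℕ} {l : List MStep} (hl : l.length = n) :
    IsDyckPath n (phiBInv l) ↔ IsRiordan n l := by
  have hend : pdepth (phiBInv l) (2 * n) = 2 * msum l := by
    rw [pdepth_phiBInv_two_mul, List.take_of_length_le hl.le]
  rw [isDyckPath_iff_pdepth, pdepth_phiBInv_nonneg_iff, hend, IsRiordan, IsMotzkin, length_phiBInv]
  constructor
  · rintro ⟨-, hsum, hnn, hH⟩
    exact ⟨⟨hl, by omega, hnn⟩, hH⟩
  · rintro ⟨⟨-, hsum, hnn⟩, hH⟩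
    exact ⟨by rw [hl], by omega, hnn, hH⟩

lemma allPeaksEven_phiBInv (l : List MStep) : AllPeaksEven (phiBInv l) := by
  intro i hi
  obtain ⟨j, rfl | rfl⟩ := Nat.even_or_odd' i
  · exact absurd hi (not_isPeak_phiBInv_two_mul l j)
  · have := hi.ycoord_add_xcoord
    rw [Nat.even_iff]
    omega

/-- `φ_B` is a bijection from Dyck paths of size `n` with all peaks at even height onto
Riordan paths of length `n`. -/
theorem phiB_bijection (n : ℕ) :
    ∃ e : {P : List Bool // IsDyckPath n P ∧ AllPeaksEven P} ≃
          {l : List MStep // IsRiordan n l},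
      ∀ P, (e P : List MStep) = phiB n P.1 := by
  have hinv (P : {P : List Bool // IsDyckPath n P ∧ AllPeaksEven P}) :
      phiBInv (phiB n P.1) = P.1 :=
    phiBInv_phiB P.2.1.1 (not_isPeak_two_mul_of_allPeaksEven P.2.1 P.2.2)
  refine ⟨{
    toFun := fun P => ⟨phiB n P.1,
      (isDyckPath_phiBInv_iff (length_phiB n P.1)).1 ((hinv P).symm ▸ P.2.1)⟩
    invFun := fun l => ⟨phiBInv l.1,
      (isDyckPath_phiBInv_iff l.2.1.1).2 l.2, allPeaksEven_phiBInv l.1⟩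
    left_inv := fun P => Subtype.ext (hinv P)
    right_inv := fun l => Subtype.ext (phiB_phiBInv l.2.1.1) }, fun _ => rfl⟩
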